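/- arXiv:2009.13189 — 2 statements merged into one kernel-verified Lean document; each statement's English description precedes it below -/
import Mathlib

section
/- Let p ≥ 1 and for each ℓ ∈ ℕ let φ_ℓ(z) = 1 − φ_{ℓ;1}z − ⋯ − φ_{ℓ;p}z^p be a complex polynomial with real coefficients satisfying Σ_{ℓ=0}^∞ (2ℓ+1)·φ_{ℓ;j}² < ∞ for each j = 1,…,p. If φ_ℓ(z) ≠ 0 for all |z| ≤ 1 and all ℓ ≥ 0, then there exists δ > 0 such that φ_ℓ(z) ≠ 0 for all |z| < 1 + δ and all ℓ ≥ 0; equivalently, there exists ξ_* > 1 such that every root ξ of every polynomial φ_ℓ of nonzero degree satisfies |ξ| ≥ ξ_*, uniformly over ℓ. -/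
noncomputable section

open MeasureTheory Complex Real Filter Topology

/-- The unit sphere S² in ℝ³. -/
abbrev S2 : Type := Metric.sphere (0 : EuclideanSpace ℝ (Fin 3)) 1

/-- The rotation group SO(3), realized as linear isometries of ℝ³ with determinant 1. -/
def SO3 : Type :=
  {g : EuclideanSpace ℝ (Fin 3) ≃ₗᵢ[ℝ] EuclideanSpace ℝ (Fin 3) //
    LinearMap.det (g.toLinearEquiv : EuclideanSpace ℝ (Fin 3) →ₗ[ℝ] EuclideanSpace ℝ (Fin 3)) = 1}

/-- Action of a rotation on the sphere. -/
def SO3.act (g : SO3) (x : S2) : S2 :=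
  ⟨g.1 x.1, by
    rw [mem_sphere_zero_iff_norm, g.1.norm_map]
    exact mem_sphere_zero_iff_norm.mp x.2⟩

/-- The ℓ-th Legendre polynomial (via the Rodrigues formula). -/
def legendreP (ℓ : ℕ) (u : ℝ) : ℝ :=
  (1 / (2 ^ ℓ * (Nat.factorial ℓ))) *
    (Polynomial.derivative^[ℓ] ((Polynomial.X ^ 2 - 1) ^ ℓ)).eval u

/-- Euclidean inner product of two points of the sphere. -/
def sdot (x y : S2) : ℝ := inner ℝ (x : EuclideanSpace ℝ (Fin 3)) (y : EuclideanSpace ℝ (Fin 3))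

/-- A zero-mean, jointly measurable, square-integrable space-time spherical random field which
is isotropic (in space) and stationary (in time):
`E[T(x,t)T(y,s)] = E[T(gx,t+h)T(gy,s+h)]` for all rotations `g` and time shifts `h`. -/
structure IsIsotropicStationary {Ω : Type} [MeasurableSpace Ω] (P : Measure Ω)
    (T : S2 → ℤ → Ω → ℝ) : Prop where
  measurable : ∀ t : ℤ, Measurable (fun pr : S2 × Ω => T pr.1 t pr.2)
  zeroMean : ∀ x t, ∫ ω, T x t ω ∂P = 0
  sqInt : ∀ x t, MemLp (fun ω => T x t ω) 2 P
  invariant : ∀ (g : SO3) (x y : S2) (t s h : ℤ),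
    ∫ ω, T x t ω * T y s ω ∂P = ∫ ω, T (g.act x) (t + h) ω * T (g.act y) (s + h) ω ∂P

/-- The family `Y ℓ m` (`|m| ≤ ℓ`) is an orthonormal basis of spherical harmonics of `L²(S²;ℂ)`:
measurable, orthonormal, complete, and satisfying the addition theorem with the Legendre
polynomials. -/
structure IsSphericalHarmonics (μ : Measure S2) (Y : ℕ → ℤ → S2 → ℂ) : Prop where
  measurable : ∀ ℓ m, Measurable (Y ℓ m)
  memL2 : ∀ ℓ m, MemLp (Y ℓ m) 2 μ
  orthonormal : ∀ (ℓ : ℕ) (m : ℤ) (ℓ' : ℕ) (m' : ℤ), |m| ≤ (ℓ : ℤ) → |m'| ≤ (ℓ' : ℤ) →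
    ∫ x, Y ℓ m x * (starRingEnd ℂ) (Y ℓ' m' x) ∂μ = if ℓ = ℓ' ∧ m = m' then 1 else 0
  complete : ∀ f : S2 → ℂ, MemLp f 2 μ →
    (∀ (ℓ : ℕ) (m : ℤ), |m| ≤ (ℓ : ℤ) → ∫ x, f x * (starRingEnd ℂ) (Y ℓ m x) ∂μ = 0) →
    f =ᵐ[μ] 0
  addition : ∀ (ℓ : ℕ) (x y : S2),
    ∑ m ∈ Finset.Icc (-(ℓ : ℤ)) (ℓ : ℤ), Y ℓ m x * (starRingEnd ℂ) (Y ℓ m y)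
      = (((2 * ℓ + 1) / (4 * π) * legendreP ℓ (sdot x y) : ℝ) : ℂ)

/-- Harmonic coefficient `a_{ℓ,m}(t) = ∫_{S²} F(x,t) conj(Y_{ℓ,m}(x)) dx` of a real random
field `F`. -/
def hCoeff {Ω : Type} (μ : Measure S2) (Y : ℕ → ℤ → S2 → ℂ) (F : S2 → ℤ → Ω → ℝ)
    (ℓ : ℕ) (m : ℤ) (t : ℤ) (ω : Ω) : ℂ :=
  ∫ x, (F x t ω : ℂ) * (starRingEnd ℂ) (Y ℓ m x) ∂μ

/-- Autocovariance kernel `r_t(x,y) = E[T(x,t) T(y,0)]`. -/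
def covKer {Ω : Type} [MeasurableSpace Ω] (P : Measure Ω) (T : S2 → ℤ → Ω → ℝ)
    (t : ℤ) (x y : S2) : ℝ :=
  ∫ ω, T x t ω * T y 0 ω ∂P

/-- Angular power spectrum `C_ℓ(t) = E[a_{ℓ,m}(t) conj(a_{ℓ,m}(0))]` (real-valued; computed
with the representative `m = 0`). -/
def angPow {Ω : Type} [MeasurableSpace Ω] (P : Measure Ω) (μ : Measure S2)
    (Y : ℕ → ℤ → S2 → ℂ) (T : S2 → ℤ → Ω → ℝ) (ℓ : ℕ) (t : ℤ) : ℝ :=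
  (∫ ω, hCoeff μ Y T ℓ 0 t ω * (starRingEnd ℂ) (hCoeff μ Y T ℓ 0 0 ω) ∂P).re

/-- The spectral density kernel `f_λ(x,y) = (1/2π) Σ_{t∈ℤ} e^{-iλt} r_t(x,y)`. -/
def specKer (r : ℤ → S2 → S2 → ℝ) (lam : ℝ) (x y : S2) : ℂ :=
  (1 / (2 * π)) * ∑' t : ℤ, Complex.exp (-Complex.I * lam * t) * (r t x y : ℂ)

/-- The eigenvalues `f_ℓ(λ) = (1/2π) Σ_{t∈ℤ} e^{-itλ} C_ℓ(t)` of the spectral density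
operator. -/
def specEig (C : ℕ → ℤ → ℝ) (ℓ : ℕ) (lam : ℝ) : ℂ :=
  (1 / (2 * π)) * ∑' t : ℤ, Complex.exp (-Complex.I * t * lam) * (C ℓ t : ℂ)

/-- Condition (i): summability of the `L²(S²×S²)` norms of the autocovariance kernels. -/
def CondI (μ : Measure S2) (r : ℤ → S2 → S2 → ℝ) : Prop :=
  (∀ t, MemLp (fun pr : S2 × S2 => r t pr.1 pr.2) 2 (μ.prod μ)) ∧
    Summable (fun t : ℤ => (eLpNorm (fun pr : S2 × S2 => r t pr.1 pr.2) 2 (μ.prod μ)).toReal)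

/-- Condition (ii): summability of the trace (nuclear) norms of the autocovariance operators;
for an isotropic field `‖𝓡_t‖_TR = Σ_ℓ (2ℓ+1)|C_ℓ(t)|`. -/
def CondII (C : ℕ → ℤ → ℝ) : Prop :=
  (∀ t : ℤ, Summable (fun ℓ : ℕ => (2 * (ℓ : ℝ) + 1) * |C ℓ t|)) ∧
    Summable (fun t : ℤ => ∑' ℓ : ℕ, (2 * (ℓ : ℝ) + 1) * |C ℓ t|)

/-- The autoregressive polynomial `φ_ℓ(z) = 1 - φ_{ℓ;1} z - ⋯ - φ_{ℓ;p} z^p`. -/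
def phiPoly (p : ℕ) (φ : ℕ → ℕ → ℝ) (ℓ : ℕ) (z : ℂ) : ℂ :=
  1 - ∑ j ∈ Finset.range p, (φ ℓ (j + 1) : ℂ) * z ^ (j + 1)

/-- The moving-average polynomial `θ_ℓ(z) = 1 + θ_{ℓ;1} z + ⋯ + θ_{ℓ;q} z^q`. -/
def thetaPoly (q : ℕ) (θ : ℕ → ℕ → ℝ) (ℓ : ℕ) (z : ℂ) : ℂ :=
  1 + ∑ j ∈ Finset.range q, (θ ℓ (j + 1) : ℂ) * z ^ (j + 1)

/-- Spherical white noise `Z ~ SWN(0, {C_{ℓ;Z}})`: each time-slice is a zero-mean isotropic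
field with angular power spectrum `{C_{ℓ;Z}}`, and harmonic coefficients at distinct times
are uncorrelated. -/
structure IsSWN {Ω : Type} [MeasurableSpace Ω] (P : Measure Ω) (μ : Measure S2)
    (Y : ℕ → ℤ → S2 → ℂ) (Z : S2 → ℤ → Ω → ℝ) (Cz : ℕ → ℝ) : Prop where
  measurable : ∀ t : ℤ, Measurable (fun pr : S2 × Ω => Z pr.1 t pr.2)
  zeroMean : ∀ x t, ∫ ω, Z x t ω ∂P = 0
  sqInt : ∀ x t, MemLp (fun ω => Z x t ω) 2 P
  summable : Summable (fun ℓ : ℕ => (2 * (ℓ : ℝ) + 1) * Cz ℓ)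
  cov : ∀ (t : ℤ) (x y : S2), ∫ ω, Z x t ω * Z y t ω ∂P
      = ∑' ℓ : ℕ, ((2 * (ℓ : ℝ) + 1) / (4 * π)) * Cz ℓ * legendreP ℓ (sdot x y)
  coeffSame : ∀ (t : ℤ) (ℓ ℓ' : ℕ) (m m' : ℤ),
    ∫ ω, hCoeff μ Y Z ℓ m t ω * (starRingEnd ℂ) (hCoeff μ Y Z ℓ' m' t ω) ∂P
      = if ℓ = ℓ' ∧ m = m' then (Cz ℓ : ℂ) else 0
  coeffUncorr : ∀ (t s : ℤ), t ≠ s → ∀ (ℓ ℓ' : ℕ) (m m' : ℤ),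
    ∫ ω, hCoeff μ Y Z ℓ m t ω * (starRingEnd ℂ) (hCoeff μ Y Z ℓ' m' s ω) ∂P = 0

/-- `b = ∫_{-π}^{π} F(λ) dα_λ` as a mean-square Riemann–Stieltjes limit over partitions
`-π = λ_1 < ⋯ < λ_{J+1} = π` of mesh tending to `0`. -/
def IsRSLimit {Ω : Type} [MeasurableSpace Ω] (P : Measure Ω) (F : ℝ → ℂ)
    (α : ℝ → Ω → ℂ) (b : Ω → ℂ) : Prop :=
  ∀ ε > 0, ∃ δ > 0, ∀ (J : ℕ) (lam : ℕ → ℝ), 0 < J → lam 0 = -π → lam J = π →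
    (∀ j < J, lam j < lam (j + 1)) → (∀ j < J, lam (j + 1) - lam j < δ) →
    ∫ ω, ‖b ω -
        ∑ j ∈ Finset.range J, F (lam j) * (α (lam (j + 1)) ω - α (lam j) ω)‖ ^ 2 ∂P < ε

/-- The one-step mean-square prediction error
`inf_{f ∈ 𝓜_n} E|a(n+1) - f|²`, where `𝓜_n` is the closed linear span of `{a(t) : t ≤ n}`
in `L²(Ω)` (the infimum over the closed span equals the one over finite linear
combinations). -/
def predErr {Ω : Type} [MeasurableSpace Ω] (P : Measure Ω) (a : ℤ → Ω → ℂ) (n : ℤ) : ℝ :=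
  sInf {e : ℝ | ∃ (k : ℕ) (c : Fin k → ℂ) (ts : Fin k → ℤ), (∀ i, ts i ≤ n) ∧
    e = ∫ ω, ‖a (n + 1) ω - ∑ i, c i * a (ts i) ω‖ ^ 2 ∂P}

/-- The one-step mean-square prediction error of the functional process:
`inf_{f ∈ 𝓜_n} E‖T_{n+1} - f‖²_{L²(S²)}`, `𝓜_n` the closed span of `{T_t : t ≤ n}`. -/
def predErrField {Ω : Type} [MeasurableSpace Ω] (P : Measure Ω) (μ : Measure S2)
    (T : S2 → ℤ → Ω → ℝ) (n : ℤ) : ℝ :=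
  sInf {e : ℝ | ∃ (k : ℕ) (c : Fin k → ℂ) (ts : Fin k → ℤ), (∀ i, ts i ≤ n) ∧
    e = ∫ ω, ∫ x, ‖(T x (n + 1) ω : ℂ) -
          ∑ i, c i * (T x (ts i) ω : ℂ)‖ ^ 2 ∂μ ∂P}

/-- Membership in the closed linear span `𝓜_n` of `{a(t) : t ≤ n}` in `L²(Ω)`:
`V` can be approximated in mean square by finite linear combinations of past values. -/
def memSpan {Ω : Type} [MeasurableSpace Ω] (P : Measure Ω) (a : ℤ → Ω → ℂ) (n : ℤ)
    (V : Ω → ℂ) : Prop :=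
  ∀ ε > 0, ∃ (k : ℕ) (c : Fin k → ℂ) (ts : Fin k → ℤ), (∀ i, ts i ≤ n) ∧
    ∫ ω, ‖V ω - ∑ i, c i * a (ts i) ω‖ ^ 2 ∂P < ε


/-!
The Hilbert–Schmidt condition forces every coefficient `φ_{ℓ;j}` to tend to `0` as `ℓ → ∞`,
so beyond some `L` the polynomials `φ_ℓ` are too close to `1` to vanish anywhere on `|z| ≤ 2`.
Each of the finitely many remaining `φ_ℓ` has finitely many roots, all of modulus `> 1`, so a
single `ξ ∈ (1, 2)` lies below the moduli of all roots of all `φ_ℓ`.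
-/

open Polynomial in
theorem Polynomial.eventually_nhds_forall_isRoot_le_norm {𝕜 : Type*} [NormedField 𝕜]
    {f : 𝕜[X]} (hf : f ≠ 0) {r : ℝ} (h : ∀ z, f.IsRoot z → r < ‖z‖) :
    ∀ᶠ ξ in 𝓝 r, ∀ z, f.IsRoot z → ξ ≤ ‖z‖ :=
  (eventually_all_finite (finite_setOfPred_isRoot hf)).mpr fun z hz =>
    (eventually_lt_nhds (h z hz)).mono fun _ => le_of_lt

theorem tendsto_zero_of_summable_mul_sq {a w : ℕ → ℝ} (hw : ∀ n, 1 ≤ w n)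
    (h : Summable fun n => w n * a n ^ 2) : Tendsto a atTop (𝓝 0) := by
  have hsq : Summable fun n => a n ^ 2 :=
    h.of_nonneg_of_le (fun n => sq_nonneg _) fun n => le_mul_of_one_le_left (sq_nonneg _) (hw n)
  have habs := (Real.continuous_sqrt.tendsto 0).comp hsq.tendsto_atTop_zero
  simp only [Function.comp_def, Real.sqrt_sq_eq_abs, Real.sqrt_zero] at habs
  exact (tendsto_zero_iff_abs_tendsto_zero a).mpr habs

def phiPolynomial (p : ℕ) (φ : ℕ → ℕ → ℝ) (ℓ : ℕ) : Polynomial ℂ :=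
  1 - ∑ j ∈ Finset.range p, Polynomial.C (φ ℓ (j + 1) : ℂ) * Polynomial.X ^ (j + 1)

theorem eval_phiPolynomial (p : ℕ) (φ : ℕ → ℕ → ℝ) (ℓ : ℕ) (z : ℂ) :
    (phiPolynomial p φ ℓ).eval z = phiPoly p φ ℓ z := by
  simp [phiPolynomial, phiPoly, Polynomial.eval_finsetSum]

theorem phiPoly_eq_zero_iff_isRoot (p : ℕ) (φ : ℕ → ℕ → ℝ) (ℓ : ℕ) (z : ℂ) :
    phiPoly p φ ℓ z = 0 ↔ (phiPolynomial p φ ℓ).IsRoot z := by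
  rw [Polynomial.IsRoot, eval_phiPolynomial]

theorem phiPolynomial_ne_zero (p : ℕ) (φ : ℕ → ℕ → ℝ) (ℓ : ℕ) : phiPolynomial p φ ℓ ≠ 0 := by
  intro h
  have h0 := eval_phiPolynomial p φ ℓ 0
  simp [h, phiPoly] at h0

theorem phiPoly_ne_zero_of_sum_lt_one {p : ℕ} {φ : ℕ → ℕ → ℝ} {ℓ : ℕ} {R : ℝ}
    (hsmall : ∑ j ∈ Finset.range p, |φ ℓ (j + 1)| * R ^ (j + 1) < 1) {z : ℂ} (hz : ‖z‖ ≤ R) :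
    phiPoly p φ ℓ z ≠ 0 := by
  intro hzero
  have hsum : ∑ j ∈ Finset.range p, (φ ℓ (j + 1) : ℂ) * z ^ (j + 1) = 1 := by
    unfold phiPoly at hzero
    linear_combination -hzero
  have : (1 : ℝ) ≤ ∑ j ∈ Finset.range p, |φ ℓ (j + 1)| * R ^ (j + 1) :=
    calc (1 : ℝ) = ‖∑ j ∈ Finset.range p, (φ ℓ (j + 1) : ℂ) * z ^ (j + 1)‖ := by simp [hsum]
      _ ≤ ∑ j ∈ Finset.range p, ‖(φ ℓ (j + 1) : ℂ) * z ^ (j + 1)‖ := norm_sum_le _ _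
      _ ≤ ∑ j ∈ Finset.range p, |φ ℓ (j + 1)| * R ^ (j + 1) := by
        gcongr with j
        rw [norm_mul, norm_pow, Complex.norm_real, Real.norm_eq_abs]
        gcongr
  linarith

theorem eventually_sum_abs_coeff_mul_pow_lt_one {p : ℕ} {φ : ℕ → ℕ → ℝ} (R : ℝ)
    (hφ : ∀ j < p, Tendsto (fun ℓ => φ ℓ (j + 1)) atTop (𝓝 0)) :
    ∀ᶠ ℓ in atTop, ∑ j ∈ Finset.range p, |φ ℓ (j + 1)| * R ^ (j + 1) < 1 := by
  have hlim : Tendsto (fun ℓ => ∑ j ∈ Finset.range p, |φ ℓ (j + 1)| * R ^ (j + 1)) atTop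
      (𝓝 (∑ _j ∈ Finset.range p, (0 : ℝ))) :=
    tendsto_finsetSum _ fun j hj => by
      simpa using ((hφ j (Finset.mem_range.mp hj)).abs.mul_const (R ^ (j + 1)))
  exact hlim.eventually_lt_const (by simp)

theorem statement_10_general (p : ℕ) (φ : ℕ → ℕ → ℝ)
    (hHS : ∀ j : ℕ, 1 ≤ j → j ≤ p →
      Summable (fun ℓ : ℕ => (2 * (ℓ : ℝ) + 1) * (φ ℓ j) ^ 2))
    (hcausal : ∀ (ℓ : ℕ) (z : ℂ), ‖z‖ ≤ 1 → phiPoly p φ ℓ z ≠ 0) :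
    (∃ δ > (0 : ℝ), ∀ (ℓ : ℕ) (z : ℂ), ‖z‖ < 1 + δ → phiPoly p φ ℓ z ≠ 0) ∧
    (∃ ξ : ℝ, 1 < ξ ∧ ∀ (ℓ : ℕ) (z : ℂ), phiPoly p φ ℓ z = 0 → ξ ≤ ‖z‖) := by
  have hcoef : ∀ j < p, Tendsto (fun ℓ => φ ℓ (j + 1)) atTop (𝓝 0) := fun j hj =>
    tendsto_zero_of_summable_mul_sq (fun ℓ => by simp) (hHS (j + 1) j.succ_pos hj)
  obtain ⟨L, hL⟩ := eventually_atTop.mp (eventually_sum_abs_coeff_mul_pow_lt_one 2 hcoef)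
  have hnear : ∀ ℓ ∈ Finset.range L, ∀ᶠ ξ in 𝓝 1, ∀ z, phiPoly p φ ℓ z = 0 → ξ ≤ ‖z‖ :=
    fun ℓ _ => by
      simp only [phiPoly_eq_zero_iff_isRoot]
      refine Polynomial.eventually_nhds_forall_isRoot_le_norm (phiPolynomial_ne_zero p φ ℓ)
        fun z hz => lt_of_not_ge fun hle => hcausal ℓ z hle ?_
      rwa [phiPoly_eq_zero_iff_isRoot]
  obtain ⟨ξ, hξ1, hξ2, hξ⟩ := ((eventually_mem_nhdsWithin (s := Set.Ioi 1)).and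
    (nhdsWithin_le_nhds ((eventually_lt_nhds one_lt_two).and
      ((eventually_all_finset _).mpr hnear)))).exists
  have hroot : ∀ ℓ z, phiPoly p φ ℓ z = 0 → ξ ≤ ‖z‖ := by
    intro ℓ z hz
    rcases lt_or_ge ℓ L with hℓ | hℓ
    · exact hξ ℓ (Finset.mem_range.mpr hℓ) z hz
    · by_contra! hlt
      exact phiPoly_ne_zero_of_sum_lt_one (hL ℓ hℓ) (hlt.trans hξ2).le hz
  exact ⟨⟨ξ - 1, sub_pos.mpr hξ1, fun ℓ z hz h0 => (hroot ℓ z h0).not_gt (by linarith)⟩,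
    ⟨ξ, hξ1, hroot⟩⟩

/-- If the AR polynomials `φ_ℓ` have Hilbert–Schmidt coefficient sequences
and no zeros in the closed unit disk, then there is `δ > 0` with no zeros in `|z| < 1 + δ`,
uniformly over `ℓ`; equivalently there is `ξ* > 1` bounding from below the moduli of all
roots uniformly over `ℓ`. -/
theorem statement_10 (p : ℕ) (hp : 1 ≤ p) (φ : ℕ → ℕ → ℝ)
    (hHS : ∀ j : ℕ, 1 ≤ j → j ≤ p →
      Summable (fun ℓ : ℕ => (2 * (ℓ : ℝ) + 1) * (φ ℓ j) ^ 2))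
    (hcausal : ∀ (ℓ : ℕ) (z : ℂ), ‖z‖ ≤ 1 → phiPoly p φ ℓ z ≠ 0) :
    (∃ δ > (0 : ℝ), ∀ (ℓ : ℕ) (z : ℂ), ‖z‖ < 1 + δ → phiPoly p φ ℓ z ≠ 0) ∧
    (∃ ξ : ℝ, 1 < ξ ∧ ∀ (ℓ : ℕ) (z : ℂ), phiPoly p φ ℓ z = 0 → ξ ≤ ‖z‖) :=
  statement_10_general p φ hHS hcausal
end
end

section
/- Let p ≥ 1, q ≥ 0 and for each ℓ ∈ ℕ let φ_ℓ(z) = 1 − φ_{ℓ;1}z − ⋯ − φ_{ℓ;p}z^p and θ_ℓ(z) = 1 + θ_{ℓ;1}z + ⋯ + θ_{ℓ;q}z^q be polynomials whose coefficient sequences satisfy Σ_ℓ (2ℓ+1)φ_{ℓ;j}² < ∞ and Σ_ℓ (2ℓ+1)θ_{ℓ;j}² < ∞ for each j, with φ_ℓ and θ_ℓ having no common zeros and φ_ℓ(z) ≠ 0 for |z| ≤ 1, all ℓ. Writing θ_ℓ(z)/φ_ℓ(z) = Σ_{j=0}^∞ ψ_{ℓ;j} z^j for |z| ≤ 1, one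 has Σ_{j=0}^∞ |ψ_{ℓ;j}|² = (1/2π)·∫_{−π}^{π} |θ_ℓ(e^{iλ})/φ_ℓ(e^{iλ})|² dλ ≤ C·(ξ_*/(ξ_*−1))^{2p} for a constant C independent of ℓ, where ξ_* > 1 is a uniform lower bound on the moduli of the roots of the φ_ℓ; consequently, for any nonnegative sequence {C_{ℓ;Z}} with Σ_ℓ (2ℓ+1)C_{ℓ;Z} < ∞, Σ_{ℓ=0}^∞ Σ_{j=0}^∞ |ψ_{ℓ;j}|²·((2ℓ+1)/(4π))·C_{ℓ;Z} < ∞. -/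
noncomputable section

open MeasureTheory Complex Real Filter Topology

/-!
Parseval's identity on the unit circle identifies `∑ⱼ ψ_{ℓ;j}²` with the mean square of
`θ_ℓ / φ_ℓ` on `|z| = 1`. The Hilbert–Schmidt conditions force every coefficient of `φ_ℓ` and
`θ_ℓ` to tend to `0` as `ℓ → ∞`, so for large `ℓ` the quotient `θ_ℓ / φ_ℓ` is bounded by `3` on
the closed disk; hence `∑ⱼ ψ_{ℓ;j}²` is bounded uniformly in `ℓ`, and the weighted series is
dominated by a multiple of `∑ₗ (2ℓ + 1) C_{ℓ;Z}`.
-/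

lemma Function.apply_extend_zero {α β γ δ : Type*} [Zero γ] [Zero δ] {f : α → β}
    (hf : Function.Injective f) (c : α → γ) {F : β → γ → δ} (hF : ∀ b, F b 0 = 0) :
    (fun b => F b (Function.extend f c 0 b)) = Function.extend f (fun a => F (f a) (c a)) 0 := by
  funext b
  by_cases hb : ∃ a, f a = b
  · obtain ⟨a, rfl⟩ := hb
    simp only [hf.extend_apply]
  · simp only [Function.extend_apply' _ _ _ hb, Pi.zero_apply, hF]

namespace AddCircle

variable {T : ℝ}

lemma continuous_tsum_mul_fourier {a : ℤ → ℂ} (ha : Summable (‖a ·‖)) :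
    Continuous fun x : AddCircle T => ∑' k, a k * fourier k x :=
  continuous_tsum (fun k => continuous_const.mul (map_continuous _)) ha fun k x => by
    simp [Circle.norm_coe]

lemma fourierCoeff_tsum_mul_fourier [Fact (0 < T)] {a : ℤ → ℂ} (ha : Summable (‖a ·‖)) (n : ℤ) :
    fourierCoeff (fun x : AddCircle T => ∑' k, a k * fourier k x) n = a n := by
  have hint : ∀ k, Integrable (fun x : AddCircle T => fourier (-n) x • (a k * fourier k x))
      haarAddCircle := fun k =>
    (continuous_const.mul (map_continuous _)).integrable_of_hasCompactSupport
      (HasCompactSupport.of_compactSpace _) |>.fourier_smul _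
  have hnorm : Summable fun k => ∫ x, ‖fourier (-n) x • (a k * fourier k x)‖
      ∂(haarAddCircle : Measure (AddCircle T)) := by
    simpa [Circle.norm_coe] using ha
  calc fourierCoeff (fun x : AddCircle T => ∑' k, a k * fourier k x) n
      = ∫ x : AddCircle T, ∑' k, fourier (-n) x • (a k * fourier k x) ∂haarAddCircle := by
        simp_rw [fourierCoeff, ← tsum_const_smul'']
    _ = ∑' k, a k * fourierCoeff (T := T) (fourier k) n := by
        rw [← integral_tsum_of_summable_integral_norm hint hnorm]
        refine tsum_congr fun k => ?_
        rw [fourierCoeff, ← integral_const_mul]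
        simp only [smul_eq_mul, mul_left_comm]
    _ = a n := by
        simp_rw [fourierCoeff_fourier]
        rw [tsum_eq_single n fun k hk => by simp [Ne.symm hk]]
        simp

lemma tsum_norm_sq_eq_integral_norm_tsum_mul_fourier_sq [Fact (0 < T)] {a : ℤ → ℂ}
    (ha : Summable (‖a ·‖)) :
    ∑' n, ‖a n‖ ^ 2 = ∫ x : AddCircle T, ‖∑' k, a k * fourier k x‖ ^ 2 ∂haarAddCircle := by
  let g : C(AddCircle T, ℂ) := ⟨_, continuous_tsum_mul_fourier ha⟩
  have hparseval := tsum_sq_fourierCoeff (ContinuousMap.toLp (E := ℂ) 2 haarAddCircle ℂ g)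
  simp only [fourierCoeff_toLp] at hparseval
  have hcoeff : fourierCoeff g = a := funext (fourierCoeff_tsum_mul_fourier ha)
  rw [hcoeff] at hparseval
  rw [hparseval]
  refine integral_congr_ae ?_
  filter_upwards [ContinuousMap.coeFn_toLp (p := 2) (𝕜 := ℂ) haarAddCircle g] with x hx
  rw [hx]
  rfl

lemma tsum_norm_sq_eq_integral_norm_tsum_mul_toCircle_pow_sq [Fact (0 < T)] {c : ℕ → ℂ}
    (hc : Summable (‖c ·‖)) :
    ∑' j, ‖c j‖ ^ 2 =
      ∫ x : AddCircle T, ‖∑' j, c j * (toCircle x : ℂ) ^ j‖ ^ 2 ∂haarAddCircle := by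
  have hinj : Function.Injective (Nat.cast : ℕ → ℤ) := Nat.cast_injective
  set a : ℤ → ℂ := Function.extend Nat.cast c 0
  have ha : Summable (‖a ·‖) := by
    rw [Function.apply_extend_zero hinj c (F := fun _ z => ‖z‖) (by simp)]
    exact (summable_extend_zero hinj).2 hc
  have hseries (x : AddCircle T) :
      ∑' k, a k * fourier k x = ∑' j, c j * (toCircle x : ℂ) ^ j := by
    rw [Function.apply_extend_zero hinj c (F := fun k z => z * fourier k x) (by simp),
      tsum_extend_zero hinj]
    simp [fourier_apply, toCircle_nsmul, Circle.coe_pow]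
  rw [← tsum_extend_zero hinj, ← Function.apply_extend_zero hinj c (F := fun _ z => ‖z‖ ^ 2)
    (by simp), tsum_norm_sq_eq_integral_norm_tsum_mul_fourier_sq (T := T) ha]
  exact integral_congr_ae (ae_of_all _ fun x => congrArg (‖·‖ ^ 2) (hseries x))

end AddCircle

open AddCircle in
lemma tsum_norm_sq_eq_intervalIntegral_norm_tsum_mul_exp_pow_sq {c : ℕ → ℂ}
    (hc : Summable (‖c ·‖)) :
    ∑' j, ‖c j‖ ^ 2 =
      (1 / (2 * π)) * ∫ lam in (-π)..π, ‖∑' j, c j * exp (I * lam) ^ j‖ ^ 2 := by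
  have hT : Fact (0 < 2 * π) := ⟨by positivity⟩
  rw [tsum_norm_sq_eq_integral_norm_tsum_mul_toCircle_pow_sq (T := 2 * π) hc,
    integral_haarAddCircle, ← AddCircle.intervalIntegral_preimage _ (-π),
    show -π + 2 * π = π by ring, smul_eq_mul, one_div]
  congr 1
  refine intervalIntegral.integral_congr fun lam _ => ?_
  simp [toCircle_apply_mk, Circle.coe_exp, mul_comm I]

open AddCircle in
lemma tsum_norm_sq_le_of_norm_tsum_mul_pow_le {c : ℕ → ℂ} (hc : Summable (‖c ·‖)) {B : ℝ}
    (hB : ∀ z : ℂ, ‖z‖ = 1 → ‖∑' j, c j * z ^ j‖ ≤ B) :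
    ∑' j, ‖c j‖ ^ 2 ≤ B ^ 2 := by
  have hT : Fact (0 < 2 * π) := ⟨by positivity⟩
  rw [tsum_norm_sq_eq_integral_norm_tsum_mul_toCircle_pow_sq (T := 2 * π) hc]
  refine (le_abs_self _).trans ?_
  have := norm_integral_le_of_norm_le_const (μ := haarAddCircle) (C := B ^ 2)
    (f := fun x : AddCircle (2 * π) => ‖∑' j, c j * (toCircle x : ℂ) ^ j‖ ^ 2)
    (ae_of_all _ fun x => ?_)
  · simpa using this
  · rw [norm_pow, norm_norm]
    exact pow_le_pow_left₀ (norm_nonneg _) (hB _ (Circle.norm_coe _)) 2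

lemma norm_sum_mul_pow_succ_le (c : ℕ → ℝ) {z : ℂ} (hz : ‖z‖ ≤ 1) (n : ℕ) :
    ‖∑ j ∈ Finset.range n, (c j : ℂ) * z ^ (j + 1)‖ ≤ ∑ j ∈ Finset.range n, |c j| := by
  refine (norm_sum_le _ _).trans (Finset.sum_le_sum fun j _ => ?_)
  rw [norm_mul, norm_real, Real.norm_eq_abs, norm_pow]
  exact mul_le_of_le_one_right (abs_nonneg _) (pow_le_one₀ (norm_nonneg z) hz)

lemma norm_thetaPoly_le (q : ℕ) (θ : ℕ → ℕ → ℝ) (ℓ : ℕ) {z : ℂ} (hz : ‖z‖ ≤ 1) :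
    ‖thetaPoly q θ ℓ z‖ ≤ 1 + ∑ j ∈ Finset.range q, |θ ℓ (j + 1)| :=
  (norm_add_le _ _).trans <| by
    rw [norm_one]
    exact add_le_add_right (norm_sum_mul_pow_succ_le _ hz q) 1

lemma one_sub_le_norm_phiPoly (p : ℕ) (φ : ℕ → ℕ → ℝ) (ℓ : ℕ) {z : ℂ} (hz : ‖z‖ ≤ 1) :
    1 - ∑ j ∈ Finset.range p, |φ ℓ (j + 1)| ≤ ‖phiPoly p φ ℓ z‖ := by
  have := norm_sub_norm_le (1 : ℂ) (∑ j ∈ Finset.range p, (φ ℓ (j + 1) : ℂ) * z ^ (j + 1))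
  rw [norm_one, ← phiPoly] at this
  linarith [norm_sum_mul_pow_succ_le (fun j => φ ℓ (j + 1)) hz p]

lemma tendsto_abs_of_summable_mul_sq {a : ℕ → ℝ}
    (ha : Summable fun ℓ : ℕ => (2 * (ℓ : ℝ) + 1) * a ℓ ^ 2) :
    Tendsto (fun ℓ => |a ℓ|) atTop (𝓝 0) := by
  have hsq : Tendsto (fun ℓ => a ℓ ^ 2) atTop (𝓝 0) :=
    squeeze_zero (fun ℓ => sq_nonneg _)
      (fun ℓ => le_mul_of_one_le_left (sq_nonneg _) (by linarith [ℓ.cast_nonneg (α := ℝ)]))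
      ha.tendsto_atTop_zero
  simpa [Real.sqrt_sq_eq_abs] using hsq.sqrt

lemma tendsto_sum_abs_of_summable_mul_sq {n : ℕ} {a : ℕ → ℕ → ℝ}
    (ha : ∀ j : ℕ, 1 ≤ j → j ≤ n → Summable fun ℓ : ℕ => (2 * (ℓ : ℝ) + 1) * a ℓ j ^ 2) :
    Tendsto (fun ℓ => ∑ j ∈ Finset.range n, |a ℓ (j + 1)|) atTop (𝓝 0) := by
  simpa using tendsto_finsetSum (Finset.range n) fun j hj =>
    tendsto_abs_of_summable_mul_sq (ha (j + 1) j.succ_pos (Finset.mem_range.mp hj))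

lemma eventually_norm_thetaPoly_div_phiPoly_le {p q : ℕ} {φ θ : ℕ → ℕ → ℝ}
    (hHSφ : ∀ j : ℕ, 1 ≤ j → j ≤ p →
      Summable (fun ℓ : ℕ => (2 * (ℓ : ℝ) + 1) * (φ ℓ j) ^ 2))
    (hHSθ : ∀ j : ℕ, 1 ≤ j → j ≤ q →
      Summable (fun ℓ : ℕ => (2 * (ℓ : ℝ) + 1) * (θ ℓ j) ^ 2)) :
    ∀ᶠ ℓ in atTop, ∀ z : ℂ, ‖z‖ ≤ 1 → ‖thetaPoly q θ ℓ z / phiPoly p φ ℓ z‖ ≤ 3 := by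
  filter_upwards [(tendsto_sum_abs_of_summable_mul_sq hHSφ).eventually_lt_const one_half_pos,
    (tendsto_sum_abs_of_summable_mul_sq hHSθ).eventually_lt_const one_half_pos]
    with ℓ hφ hθ z hz
  -- the coefficient sums below `1 / 2` give `‖θ_ℓ z‖ ≤ 3 / 2` and `‖φ_ℓ z‖ ≥ 1 / 2`
  have hφ_ge := one_sub_le_norm_phiPoly p φ ℓ hz
  rw [norm_div, div_le_iff₀ (by linarith)]
  linarith [norm_thetaPoly_le q θ ℓ hz]

section SeriesCoefficients

variable {p q : ℕ} {φ θ ψ : ℕ → ℕ → ℝ}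

lemma tsum_sq_eq_intervalIntegral_norm_thetaPoly_div_phiPoly_sq
    (hcausal : ∀ (ℓ : ℕ) (z : ℂ), ‖z‖ ≤ 1 → phiPoly p φ ℓ z ≠ 0)
    (hψabs : ∀ ℓ : ℕ, Summable (fun j : ℕ => |ψ ℓ j|))
    (hψ : ∀ (ℓ : ℕ) (z : ℂ), ‖z‖ ≤ 1 →
      (∑' j : ℕ, (ψ ℓ j : ℂ) * z ^ j) * phiPoly p φ ℓ z = thetaPoly q θ ℓ z) (ℓ : ℕ) :
    ∑' j, ψ ℓ j ^ 2 = (1 / (2 * π)) * ∫ lam in (-π)..π,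
      ‖thetaPoly q θ ℓ (exp (I * lam)) / phiPoly p φ ℓ (exp (I * lam))‖ ^ 2 := by
  have := tsum_norm_sq_eq_intervalIntegral_norm_tsum_mul_exp_pow_sq
    (c := fun j => (ψ ℓ j : ℂ)) (by simpa using hψabs ℓ)
  simp only [norm_real, Real.norm_eq_abs, sq_abs] at this
  rw [this]
  congr 1
  refine intervalIntegral.integral_congr fun lam _ => ?_
  have hz : ‖exp (I * lam)‖ ≤ 1 := (norm_exp_I_mul_ofReal lam).le
  simp only [eq_div_of_mul_eq (hcausal ℓ _ hz) (hψ ℓ _ hz)]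

lemma tsum_sq_le_of_norm_thetaPoly_div_phiPoly_le
    (hcausal : ∀ (ℓ : ℕ) (z : ℂ), ‖z‖ ≤ 1 → phiPoly p φ ℓ z ≠ 0)
    (hψabs : ∀ ℓ : ℕ, Summable (fun j : ℕ => |ψ ℓ j|))
    (hψ : ∀ (ℓ : ℕ) (z : ℂ), ‖z‖ ≤ 1 →
      (∑' j : ℕ, (ψ ℓ j : ℂ) * z ^ j) * phiPoly p φ ℓ z = thetaPoly q θ ℓ z) {ℓ : ℕ} {B : ℝ}
    (hB : ∀ z : ℂ, ‖z‖ ≤ 1 → ‖thetaPoly q θ ℓ z / phiPoly p φ ℓ z‖ ≤ B) :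
    ∑' j, ψ ℓ j ^ 2 ≤ B ^ 2 := by
  have := tsum_norm_sq_le_of_norm_tsum_mul_pow_le (c := fun j => (ψ ℓ j : ℂ)) (B := B)
    (by simpa using hψabs ℓ) fun z hz => ?_
  · simpa only [norm_real, Real.norm_eq_abs, sq_abs] using this
  · rw [eq_div_of_mul_eq (hcausal ℓ _ hz.le) (hψ ℓ _ hz.le)]
    exact hB z hz.le

end SeriesCoefficients

theorem statement_11_general (p q : ℕ) (φ θ : ℕ → ℕ → ℝ)
    (hHSφ : ∀ j : ℕ, 1 ≤ j → j ≤ p →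
      Summable (fun ℓ : ℕ => (2 * (ℓ : ℝ) + 1) * (φ ℓ j) ^ 2))
    (hHSθ : ∀ j : ℕ, 1 ≤ j → j ≤ q →
      Summable (fun ℓ : ℕ => (2 * (ℓ : ℝ) + 1) * (θ ℓ j) ^ 2))
    (hcausal : ∀ (ℓ : ℕ) (z : ℂ), ‖z‖ ≤ 1 → phiPoly p φ ℓ z ≠ 0)
    (ψ : ℕ → ℕ → ℝ)
    (hψabs : ∀ ℓ : ℕ, Summable (fun j : ℕ => |ψ ℓ j|))
    (hψ : ∀ (ℓ : ℕ) (z : ℂ), ‖z‖ ≤ 1 →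
      (∑' j : ℕ, (ψ ℓ j : ℂ) * z ^ j) * phiPoly p φ ℓ z = thetaPoly q θ ℓ z)
    (ξ : ℝ) (hξ : 1 < ξ) :
    (∀ ℓ : ℕ, ∑' j : ℕ, (ψ ℓ j) ^ 2 =
      (1 / (2 * π)) * ∫ lam in (-π)..π,
        ‖thetaPoly q θ ℓ (Complex.exp (Complex.I * lam)) /
          phiPoly p φ ℓ (Complex.exp (Complex.I * lam))‖ ^ 2) ∧
    (∃ C : ℝ, ∀ ℓ : ℕ, ∑' j : ℕ, (ψ ℓ j) ^ 2 ≤ C * (ξ / (ξ - 1)) ^ (2 * p)) ∧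
    (∀ Cz : ℕ → ℝ, (∀ ℓ, 0 ≤ Cz ℓ) →
      Summable (fun ℓ : ℕ => (2 * (ℓ : ℝ) + 1) * Cz ℓ) →
      Summable (fun ℓ : ℕ =>
        (∑' j : ℕ, (ψ ℓ j) ^ 2) * ((2 * (ℓ : ℝ) + 1) / (4 * π)) * Cz ℓ)) := by
  obtain ⟨B, hB⟩ : BddAbove (Set.range fun ℓ => ∑' j, ψ ℓ j ^ 2) :=
    IsBoundedUnder.bddAbove_range <| isBoundedUnder_of_eventually_le <|
      (eventually_norm_thetaPoly_div_phiPoly_le hHSφ hHSθ).mono fun ℓ hℓ =>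
        tsum_sq_le_of_norm_thetaPoly_div_phiPoly_le hcausal hψabs hψ hℓ
  have hbound (ℓ : ℕ) : ∑' j, ψ ℓ j ^ 2 ≤ B := hB ⟨ℓ, rfl⟩
  have hK : (ξ / (ξ - 1)) ^ (2 * p) ≠ 0 := pow_ne_zero _ (div_pos (by linarith) (by linarith)).ne'
  refine ⟨tsum_sq_eq_intervalIntegral_norm_thetaPoly_div_phiPoly_sq hcausal hψabs hψ,
    ⟨B / (ξ / (ξ - 1)) ^ (2 * p), fun ℓ => by rw [div_mul_cancel₀ _ hK]; exact hbound ℓ⟩,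
    fun Cz hCz hCzsum => ?_⟩
  refine .of_nonneg_of_le (fun ℓ => ?_) (fun ℓ => ?_) (hCzsum.mul_left (B / (4 * π)))
  · have := hCz ℓ
    positivity
  · calc (∑' j, ψ ℓ j ^ 2) * ((2 * (ℓ : ℝ) + 1) / (4 * π)) * Cz ℓ
        ≤ B * ((2 * (ℓ : ℝ) + 1) / (4 * π)) * Cz ℓ := by gcongr; exacts [hCz ℓ, hbound ℓ]
      _ = B / (4 * π) * ((2 * ℓ + 1) * Cz ℓ) := by ring

/-- For causal SPHARMA polynomials, the power-series coefficients `ψ_{ℓ;j}`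
of `θ_ℓ/φ_ℓ` satisfy `Σ_j ψ_{ℓ;j}² = (1/2π) ∫_{-π}^π |θ_ℓ(e^{iλ})/φ_ℓ(e^{iλ})|² dλ
≤ C (ξ*/(ξ*-1))^{2p}` uniformly over `ℓ`; consequently
`Σ_ℓ Σ_j ψ_{ℓ;j}² ((2ℓ+1)/4π) C_{ℓ;Z} < ∞` for any summable nonnegative spectrum. -/
theorem statement_11 (p q : ℕ) (hp : 1 ≤ p) (φ θ : ℕ → ℕ → ℝ)
    (hHSφ : ∀ j : ℕ, 1 ≤ j → j ≤ p →
      Summable (fun ℓ : ℕ => (2 * (ℓ : ℝ) + 1) * (φ ℓ j) ^ 2))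
    (hHSθ : ∀ j : ℕ, 1 ≤ j → j ≤ q →
      Summable (fun ℓ : ℕ => (2 * (ℓ : ℝ) + 1) * (θ ℓ j) ^ 2))
    (hnocommon : ∀ (ℓ : ℕ) (z : ℂ), ¬(phiPoly p φ ℓ z = 0 ∧ thetaPoly q θ ℓ z = 0))
    (hcausal : ∀ (ℓ : ℕ) (z : ℂ), ‖z‖ ≤ 1 → phiPoly p φ ℓ z ≠ 0)
    (ψ : ℕ → ℕ → ℝ)
    (hψabs : ∀ ℓ : ℕ, Summable (fun j : ℕ => |ψ ℓ j|))
    (hψ : ∀ (ℓ : ℕ) (z : ℂ), ‖z‖ ≤ 1 →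
      (∑' j : ℕ, (ψ ℓ j : ℂ) * z ^ j) * phiPoly p φ ℓ z = thetaPoly q θ ℓ z)
    (ξ : ℝ) (hξ : 1 < ξ)
    (hroot : ∀ (ℓ : ℕ) (z : ℂ), phiPoly p φ ℓ z = 0 → ξ ≤ ‖z‖) :
    (∀ ℓ : ℕ, ∑' j : ℕ, (ψ ℓ j) ^ 2 =
      (1 / (2 * π)) * ∫ lam in (-π)..π,
        ‖thetaPoly q θ ℓ (Complex.exp (Complex.I * lam)) /
          phiPoly p φ ℓ (Complex.exp (Complex.I * lam))‖ ^ 2) ∧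
    (∃ C : ℝ, ∀ ℓ : ℕ, ∑' j : ℕ, (ψ ℓ j) ^ 2 ≤ C * (ξ / (ξ - 1)) ^ (2 * p)) ∧
    (∀ Cz : ℕ → ℝ, (∀ ℓ, 0 ≤ Cz ℓ) →
      Summable (fun ℓ : ℕ => (2 * (ℓ : ℝ) + 1) * Cz ℓ) →
      Summable (fun ℓ : ℕ =>
        (∑' j : ℕ, (ψ ℓ j) ^ 2) * ((2 * (ℓ : ℝ) + 1) / (4 * π)) * Cz ℓ)) :=
  statement_11_general p q φ θ hHSφ hHSθ hcausal ψ hψabs hψ ξ hξ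
end
end
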